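/- Let T = (Fˣ)ⁿ and let M ∈ GL(n,ℤ) satisfy M^m = I for some m ≥ 1, acting on T by the automorphism σ(t)_i = ∏_j t_j^{M_{ij}}. Then the following conditions are equivalent: (i) the fixed subgroup T^σ = {t ∈ T : σ(t) = t} is finite; (ii) every t ∈ T^σ satisfies t^m = 1 (that is, t_i^m = 1 for all i); (iii) for every t ∈ T one has t · σ(t) · σ²(t) ⋯ σ^{m−1}(t) = 1. -/

import Mathlib

open scoped BigOperators

noncomputable section

variable (F : Type*) [Field F] [IsAlgClosed F] [CharZero F]

/-- The automorphism of the torus `T = (Fˣ)ⁿ` induced by an integer matrix `M`: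
`σ(t)_i = ∏_j t_j ^ M_{ij}`. -/
def sigmaM {n : ℕ} (M : Matrix (Fin n) (Fin n) ℤ) (t : Fin n → Fˣ) : Fin n → Fˣ :=
  fun i => ∏ j, t j ^ M i j

/-!
Put `B = M - 1`, so that the fixed points of `σ` are the kernel of `σ_B`. If `det B ≠ 0`, then
`adj B * B = det B • 1` shows that every fixed point is `det B`-torsion, so there are finitely many;
and `(1 + M + ⋯ + M^(m-1)) * B = M^m - 1 = 0` forces `1 + M + ⋯ + M^(m-1) = 0`, i.e. the norm
`t ↦ t σ(t) ⋯ σ^(m-1)(t)` is trivial. If `det B = 0`, a nonzero integer vector `v` with `M v = v`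
gives the fixed points `(s ^ v_j)_j`; taking `s` of infinite order (`s = 2`, since `char F = 0`)
yields infinitely many of them, not all killed by `m`. Finally the norm of a fixed point `t` is `t^m`.
-/

open Finset
open scoped Matrix

theorem zpow_sum {κ M : Type*} [CommGroup M] (a : M) (s : Finset κ) (f : κ → ℤ) :
    a ^ ∑ i ∈ s, f i = ∏ i ∈ s, a ^ f i :=
  cons_induction (by simp) (fun _ _ _ _ ↦ by simp [prod_cons, sum_cons, zpow_add, *]) s

theorem Matrix.geom_sum_eq_zero_of_pow_eq_one {ι R : Type*} [Fintype ι] [DecidableEq ι]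
    [CommRing R] [IsDomain R] {A : Matrix ι ι R} {m : ℕ} (hA : A ^ m = 1)
    (hdet : (A - 1).det ≠ 0) : ∑ k ∈ range m, A ^ k = 0 := by
  have h : (∑ k ∈ range m, A ^ k) * (A - 1) * (A - 1).adjugate = 0 := by
    rw [geom_sum_mul, hA, sub_self, zero_mul]
  rwa [mul_assoc, Matrix.mul_adjugate, Matrix.mul_smul, mul_one, smul_eq_zero,
    or_iff_right hdet] at h

theorem Matrix.exists_mulVec_eq_self_of_det_sub_one_eq_zero {ι R : Type*} [Fintype ι]
    [DecidableEq ι] [CommRing R] [IsDomain R] {A : Matrix ι ι R} (hdet : (A - 1).det = 0) :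
    ∃ v ≠ 0, A *ᵥ v = v := by
  obtain ⟨v, hv, hAv⟩ := Matrix.exists_mulVec_eq_zero_iff.mpr hdet
  exact ⟨v, hv, by rwa [Matrix.sub_mulVec, Matrix.one_mulVec, sub_eq_zero] at hAv⟩

theorem prod_range_iterate_of_isFixedPt {α : Type*} [CommMonoid α] {f : α → α} {t : α}
    (ht : Function.IsFixedPt f t) (m : ℕ) : ∏ k ∈ range m, f^[k] t = t ^ m := by
  simp [Function.iterate_fixed ht]

theorem Units.exists_not_isOfFinOrder {K : Type*} [Field K] [CharZero K] :
    ∃ s : Kˣ, ¬IsOfFinOrder s := by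
  refine ⟨Units.mk0 2 two_ne_zero, fun h => ?_⟩
  obtain ⟨k, hk, h2⟩ := isOfFinOrder_iff_pow_eq_one.mp h
  have : ((2 ^ k : ℕ) : K) = ((1 : ℕ) : K) := by
    simpa [Units.ext_iff] using h2
  have := Nat.pow_eq_one.mp (Nat.cast_injective this)
  omega

section torusEnd

variable {ι G : Type*} [Fintype ι] [DecidableEq ι] [CommGroup G]

def torusEnd : Matrix ι ι ℤ →* Monoid.End (ι → G) where
  toFun A :=
    { toFun := fun t i => ∏ j, t j ^ A i j
      map_one' := by ext; simp
      map_mul' := fun s t => by ext; simp [mul_zpow, prod_mul_distrib] }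
  map_one' := by
    ext t i
    show ∏ j, t j ^ (1 : Matrix ι ι ℤ) i j = t i
    simp [Matrix.one_apply]
  map_mul' A B := by
    ext t i
    show ∏ l, t l ^ (A * B) i l = ∏ j, (∏ l, t l ^ B j l) ^ A i j
    simp only [Matrix.mul_apply, zpow_sum, ← prod_zpow, ← zpow_mul]
    rw [prod_comm]
    exact prod_congr rfl fun j _ => prod_congr rfl fun l _ => by rw [mul_comm]

@[simp]
theorem torusEnd_apply (A : Matrix ι ι ℤ) (t : ι → G) (i : ι) :
    torusEnd A t i = ∏ j, t j ^ A i j := rfl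

theorem torusEnd_one_apply (t : ι → G) : torusEnd 1 t = t := by
  rw [map_one]; rfl

theorem torusEnd_mul_apply (A B : Matrix ι ι ℤ) (t : ι → G) :
    torusEnd (A * B) t = torusEnd A (torusEnd B t) := by
  rw [map_mul]; rfl

theorem torusEnd_zero_apply (t : ι → G) : torusEnd 0 t = 1 := by
  ext; simp

theorem torusEnd_add_apply (A B : Matrix ι ι ℤ) (t : ι → G) :
    torusEnd (A + B) t = torusEnd A t * torusEnd B t := by
  ext i
  simp [zpow_add, prod_mul_distrib]

theorem torusEnd_sum_apply {κ : Type*} (s : Finset κ) (A : κ → Matrix ι ι ℤ) (t : ι → G) :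
    torusEnd (∑ k ∈ s, A k) t = ∏ k ∈ s, torusEnd (A k) t := by
  induction s using Finset.cons_induction with
  | empty => exact torusEnd_zero_apply t
  | cons a s ha ih => rw [sum_cons, prod_cons, torusEnd_add_apply, ih]

theorem torusEnd_smul_apply (d : ℤ) (A : Matrix ι ι ℤ) (t : ι → G) :
    torusEnd (d • A) t = torusEnd A t ^ d := by
  ext i
  simp only [torusEnd_apply, Matrix.smul_apply, smul_eq_mul, Pi.pow_apply, ← prod_zpow, ← zpow_mul,
    mul_comm]

theorem torusEnd_apply_zpow (A : Matrix ι ι ℤ) (s : G) (v : ι → ℤ) :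
    torusEnd A (fun j => s ^ v j) = fun i => s ^ (A *ᵥ v) i := by
  ext i; simp [Matrix.mulVec, dotProduct, zpow_sum, ← zpow_mul, mul_comm]

theorem torusEnd_sub_one_apply_eq_one_iff (A : Matrix ι ι ℤ) (t : ι → G) :
    torusEnd (A - 1) t = 1 ↔ torusEnd A t = t := by
  conv_rhs => rw [← sub_add_cancel A 1, torusEnd_add_apply, torusEnd_one_apply]
  exact mul_eq_right.symm

theorem pow_det_sub_one_eq_one_of_torusEnd_eq_self {A : Matrix ι ι ℤ} {t : ι → G}
    (ht : torusEnd A t = t) : t ^ (A - 1).det = 1 := by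
  have h := congr(torusEnd (A - 1).adjugate $((torusEnd_sub_one_apply_eq_one_iff A t).2 ht))
  rwa [← torusEnd_mul_apply, map_one, Matrix.adjugate_mul, torusEnd_smul_apply,
    torusEnd_one_apply] at h

theorem prod_range_iterate_torusEnd (A : Matrix ι ι ℤ) (m : ℕ) (t : ι → G) :
    ∏ k ∈ range m, (torusEnd A)^[k] t = torusEnd (∑ k ∈ range m, A ^ k) t := by
  simp only [torusEnd_sum_apply, map_pow, Monoid.End.coe_pow]

theorem infinite_setOf_torusEnd_eq_self {A : Matrix ι ι ℤ} (hdet : (A - 1).det = 0) {s : G}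
    (hs : ¬IsOfFinOrder s) : {t : ι → G | torusEnd A t = t}.Infinite := by
  obtain ⟨v, hv, hAv⟩ := Matrix.exists_mulVec_eq_self_of_det_sub_one_eq_zero hdet
  obtain ⟨j, hj⟩ := Function.ne_iff.mp hv
  refine Set.infinite_of_injective_forall_mem (f := fun z : ℤ => fun i => s ^ (z * v i))
    (fun z z' h => ?_) (fun z => ?_)
  · exact mul_right_cancel₀ hj (injective_zpow_iff_not_isOfFinOrder.mpr hs (congrFun h j))
  · simpa only [Set.mem_ofPred_eq, zpow_mul, hAv] using torusEnd_apply_zpow A (s ^ z) v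

theorem exists_torusEnd_eq_self_pow_ne_one {A : Matrix ι ι ℤ} (hdet : (A - 1).det = 0) {s : G}
    (hs : ¬IsOfFinOrder s) {m : ℕ} (hm : m ≠ 0) :
    ∃ t : ι → G, torusEnd A t = t ∧ ∃ i, t i ^ m ≠ 1 := by
  obtain ⟨v, hv, hAv⟩ := Matrix.exists_mulVec_eq_self_of_det_sub_one_eq_zero hdet
  obtain ⟨j, hj⟩ := Function.ne_iff.mp hv
  refine ⟨fun i => s ^ v i, by rw [torusEnd_apply_zpow, hAv], j, fun h => ?_⟩
  rw [← zpow_natCast, ← zpow_mul, ← zpow_zero s] at h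
  exact mul_ne_zero hj (Int.natCast_ne_zero.mpr hm) (injective_zpow_iff_not_isOfFinOrder.mpr hs h)

theorem finite_setOf_torusEnd_eq_self {K : Type*} [CommRing K] [IsDomain K] {A : Matrix ι ι ℤ}
    (hdet : (A - 1).det ≠ 0) : {t : ι → Kˣ | torusEnd A t = t}.Finite := by
  have : NeZero (A - 1).det.natAbs := ⟨Int.natAbs_ne_zero.mpr hdet⟩
  have hroots : (rootsOfUnity (A - 1).det.natAbs K : Set Kˣ).Finite :=
    Set.finite_coe_iff.mp (inferInstanceAs (Finite (rootsOfUnity _ K)))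
  refine (Set.Finite.pi' fun _ => hroots).subset fun t ht i => ?_
  have := congrFun (pow_det_sub_one_eq_one_of_torusEnd_eq_self ht) i
  rwa [SetLike.mem_coe, mem_rootsOfUnity, pow_natAbs_eq_one]

end torusEnd

theorem torus_automorphism_fixed_points_tfae
    (n m : ℕ) (hm : 1 ≤ m)
    (M : Matrix.GeneralLinearGroup (Fin n) ℤ) (hM : M ^ m = 1) :
    ({t : Fin n → Fˣ | sigmaM F (M : Matrix (Fin n) (Fin n) ℤ) t = t}.Finite ↔
      ∀ t : Fin n → Fˣ, sigmaM F (M : Matrix (Fin n) (Fin n) ℤ) t = t →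
        ∀ i, (t i) ^ m = 1) ∧
    ((∀ t : Fin n → Fˣ, sigmaM F (M : Matrix (Fin n) (Fin n) ℤ) t = t →
        ∀ i, (t i) ^ m = 1) ↔
      ∀ t : Fin n → Fˣ,
        ∏ k ∈ Finset.range m, (sigmaM F (M : Matrix (Fin n) (Fin n) ℤ))^[k] t = 1) := by
  set A : Matrix (Fin n) (Fin n) ℤ := ↑M
  have hσ : sigmaM F A = torusEnd A := rfl
  have hAm : A ^ m = 1 := by rw [← Units.val_pow_eq_pow_val, hM, Units.val_one]
  obtain ⟨s, hs⟩ := Units.exists_not_isOfFinOrder (K := F)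
  have norm_eq_one (hdet : (A - 1).det ≠ 0) (t : Fin n → Fˣ) :
      ∏ k ∈ range m, (sigmaM F A)^[k] t = 1 := by
    rw [hσ, prod_range_iterate_torusEnd, Matrix.geom_sum_eq_zero_of_pow_eq_one hAm hdet,
      torusEnd_zero_apply]
  have pow_eq_one (h : ∀ t : Fin n → Fˣ, ∏ k ∈ range m, (sigmaM F A)^[k] t = 1)
      (t : Fin n → Fˣ) (ht : sigmaM F A t = t) (i : Fin n) : t i ^ m = 1 := by
    have := congrFun (h t) i
    rwa [prod_range_iterate_of_isFixedPt ht m] at this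
  have det_ne_zero (h : ∀ t : Fin n → Fˣ, sigmaM F A t = t → ∀ i, t i ^ m = 1) :
      (A - 1).det ≠ 0 := fun hdet => by
    obtain ⟨t, ht, i, hi⟩ := exists_torusEnd_eq_self_pow_ne_one hdet hs (by omega : m ≠ 0)
    exact hi (h t ht i)
  exact ⟨⟨fun hfin => pow_eq_one (norm_eq_one fun hdet =>
      infinite_setOf_torusEnd_eq_self hdet hs hfin),
    fun h => finite_setOf_torusEnd_eq_self (det_ne_zero h)⟩,
    ⟨fun h => norm_eq_one (det_ne_zero h), pow_eq_one⟩⟩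

end
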